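/- arXiv:1008.0180 — 4 statements merged into one kernel-verified Lean document; each statement's English description precedes it below -/
import Mathlib

section
/- Let X be a totally disconnected compact metric space and φ : X → X a homeomorphism with invariant probability measures M_φ. If for every f ∈ C(X,ℤ) either ∫ f dμ ≥ 0 for all μ ∈ M_φ, or ∫ f dμ ≤ 0 for all μ ∈ M_φ, then φ is uniquely ergodic (M_φ is a singleton). -/
open MeasureTheory

/-- The set of `φ`-invariant Borel probability measures. -/
def InvProbMeasures {X : Type*} [TopologicalSpace X] [MeasurableSpace X]
    (φ : X ≃ₜ X) : Set (Measure X) :=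
  {μ | IsProbabilityMeasure μ ∧ Measure.map φ μ = μ}

open Set Filter Topology

section Aux

variable {X : Type*} [TopologicalSpace X] (φ : X ≃ₜ X) (x₀ : X)

/-- Birkhoff average of the indicator of `s` along the orbit of `x₀`. -/
noncomputable def birkAvg (n : ℕ) (s : Set X) : ℝ :=
  (n : ℝ)⁻¹ * ∑ k ∈ Finset.range n, s.indicator (fun _ => (1:ℝ)) ((fun x => φ x)^[k] x₀)

lemma birkAvg_mem_Icc (n : ℕ) (s : Set X) : birkAvg φ x₀ n s ∈ Icc (0:ℝ) 1 := by
  constructor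
  · apply mul_nonneg (by positivity)
    exact Finset.sum_nonneg fun k _ => Set.indicator_nonneg (fun _ _ => zero_le_one) _
  · rcases Nat.eq_zero_or_pos n with rfl | hn
    · simp [birkAvg]
    · rw [birkAvg, inv_mul_le_iff₀ (by positivity), mul_one]
      calc ∑ k ∈ Finset.range n, s.indicator (fun _ => (1:ℝ)) ((fun x => φ x)^[k] x₀)
          ≤ ∑ k ∈ Finset.range n, 1 := by
            refine Finset.sum_le_sum fun k _ => ?_
            exact Set.indicator_le_self' (fun _ _ => zero_le_one) _ |>.trans le_rfl
        _ = n := by simp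

lemma exists_birkLim (𝒰 : Ultrafilter ℕ) (s : Set X) :
    ∃ L ∈ Icc (0:ℝ) 1, Tendsto (fun n => birkAvg φ x₀ n s) 𝒰 (𝓝 L) := by
  have h := (isCompact_Icc (a := (0:ℝ)) (b := 1)).ultrafilter_le_nhds
    (𝒰.map (fun n => birkAvg φ x₀ n s)) ?_
  · obtain ⟨L, hL, hle⟩ := h
    exact ⟨L, hL, hle⟩
  · refine le_principal_iff.mpr ?_
    exact Filter.mem_map.mpr (by filter_upwards with n using birkAvg_mem_Icc φ x₀ n s)

/-- Ultrafilter limit of Birkhoff averages. -/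
noncomputable def birkLim (𝒰 : Ultrafilter ℕ) (s : Set X) : ℝ :=
  (exists_birkLim φ x₀ 𝒰 s).choose

lemma birkLim_mem_Icc (𝒰 : Ultrafilter ℕ) (s : Set X) :
    birkLim φ x₀ 𝒰 s ∈ Icc (0:ℝ) 1 :=
  (exists_birkLim φ x₀ 𝒰 s).choose_spec.1

lemma tendsto_birkLim (𝒰 : Ultrafilter ℕ) (s : Set X) :
    Tendsto (fun n => birkAvg φ x₀ n s) 𝒰 (𝓝 (birkLim φ x₀ 𝒰 s)) :=
  (exists_birkLim φ x₀ 𝒰 s).choose_spec.2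

variable (𝒰 : Ultrafilter ℕ) (h𝒰 : (𝒰 : Filter ℕ) ≤ atTop)

lemma birkLim_nonneg (s : Set X) : 0 ≤ birkLim φ x₀ 𝒰 s :=
  (birkLim_mem_Icc φ x₀ 𝒰 s).1

include h𝒰 in
lemma birkLim_univ : birkLim φ x₀ 𝒰 (univ : Set X) = 1 := by
  refine tendsto_nhds_unique (tendsto_birkLim φ x₀ 𝒰 univ) ?_
  have : ∀ n : ℕ, 1 ≤ n → birkAvg φ x₀ n (univ : Set X) = 1 := by
    intro n hn
    simp only [birkAvg, indicator_univ, Finset.sum_const, Finset.card_range, smul_eq_mul, mul_one]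
    field_simp
    simp
  refine Tendsto.congr' ?_ tendsto_const_nhds
  filter_upwards [h𝒰 (eventually_ge_atTop 1)] with n hn
  exact (this n hn).symm

lemma birkLim_union {s t : Set X} (hst : Disjoint s t) :
    birkLim φ x₀ 𝒰 (s ∪ t) = birkLim φ x₀ 𝒰 s + birkLim φ x₀ 𝒰 t := by
  refine tendsto_nhds_unique (tendsto_birkLim φ x₀ 𝒰 (s ∪ t)) ?_
  have heq : ∀ n, birkAvg φ x₀ n (s ∪ t) = birkAvg φ x₀ n s + birkAvg φ x₀ n t := by
    intro n
    simp only [birkAvg, ← mul_add, ← Finset.sum_add_distrib]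
    congr 1
    refine Finset.sum_congr rfl fun k _ => ?_
    exact congrFun (Set.indicator_union_of_disjoint hst _) _
  rw [funext heq]
  exact ((tendsto_birkLim φ x₀ 𝒰 s).add (tendsto_birkLim φ x₀ 𝒰 t))

lemma birkLim_mono {s t : Set X} (hst : s ⊆ t) :
    birkLim φ x₀ 𝒰 s ≤ birkLim φ x₀ 𝒰 t := by
  refine le_of_tendsto_of_tendsto' (tendsto_birkLim φ x₀ 𝒰 s) (tendsto_birkLim φ x₀ 𝒰 t) ?_
  intro n
  refine mul_le_mul_of_nonneg_left ?_ (by positivity)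
  exact Finset.sum_le_sum fun k _ =>
    Set.indicator_le_indicator_of_subset hst (fun _ => zero_le_one) _

include h𝒰 in
lemma birkLim_preimage (s : Set X) :
    birkLim φ x₀ 𝒰 ((φ : X → X) ⁻¹' s) = birkLim φ x₀ 𝒰 s := by
  have key : Tendsto (fun n => birkAvg φ x₀ n ((φ : X → X) ⁻¹' s) - birkAvg φ x₀ n s)
      atTop (𝓝 0) := by
    set a : ℕ → ℝ := fun k => s.indicator (fun _ => (1:ℝ)) ((fun x => φ x)^[k] x₀) with ha
    have ha01 : ∀ k, a k ∈ Icc (0:ℝ) 1 := by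
      intro k
      constructor
      · exact Set.indicator_nonneg (fun _ _ => zero_le_one) _
      · exact Set.indicator_le_self' (fun _ _ => zero_le_one) _ |>.trans le_rfl
    have hdiff : ∀ n : ℕ, birkAvg φ x₀ n ((φ : X → X) ⁻¹' s) - birkAvg φ x₀ n s
        = (n : ℝ)⁻¹ * (a n - a 0) := by
      intro n
      have hpre : ∀ k, ((φ : X → X) ⁻¹' s).indicator (fun _ => (1:ℝ)) ((fun x => φ x)^[k] x₀)
          = a (k + 1) := by
        intro k
        simp only [ha, Set.indicator_apply, Set.mem_preimage, Function.iterate_succ',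
          Function.comp_apply]
        rfl
      simp only [birkAvg, hpre, ← mul_sub]
      congr 1
      have h1 : ∑ k ∈ Finset.range (n+1), a k = (∑ k ∈ Finset.range n, a (k+1)) + a 0 :=
        Finset.sum_range_succ' a n
      have h2 : ∑ k ∈ Finset.range (n+1), a k = (∑ k ∈ Finset.range n, a k) + a n :=
        Finset.sum_range_succ a n
      have : ∑ k ∈ Finset.range n, a (k+1) = (∑ k ∈ Finset.range n, a k) + a n - a 0 := by
        rw [← h2, h1]; ring
      rw [this]; ring
    have hb : Tendsto (fun n : ℕ => 2 / (n : ℝ)) atTop (𝓝 0) :=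
      tendsto_const_div_atTop_nhds_zero_nat 2
    refine squeeze_zero_norm (fun n => ?_) hb
    rw [hdiff, norm_mul, Real.norm_eq_abs ((n:ℝ)⁻¹), abs_of_nonneg (by positivity),
      div_eq_inv_mul]
    refine mul_le_mul_of_nonneg_left ?_ (by positivity)
    have h1 := (ha01 n).1; have h2 := (ha01 n).2
    have h3 := (ha01 0).1; have h4 := (ha01 0).2
    rw [Real.norm_eq_abs, abs_le]
    constructor <;> linarith
  have t1 : Tendsto (fun n => birkAvg φ x₀ n ((φ : X → X) ⁻¹' s) - birkAvg φ x₀ n s)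
      𝒰 (𝓝 (birkLim φ x₀ 𝒰 ((φ : X → X) ⁻¹' s) - birkLim φ x₀ 𝒰 s)) :=
    (tendsto_birkLim φ x₀ 𝒰 _).sub (tendsto_birkLim φ x₀ 𝒰 s)
  have := tendsto_nhds_unique t1 (key.mono_left h𝒰)
  linarith

end Aux

section Sep

variable {X : Type*} [TopologicalSpace X] [CompactSpace X] [T2Space X]
  [TotallyDisconnectedSpace X]

lemma exists_clopen_between {K U : Set X} (hK : IsCompact K) (hU : IsOpen U) (hKU : K ⊆ U) :
    ∃ W : Set X, IsClopen W ∧ K ⊆ W ∧ W ⊆ U := by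
  have hcl : ∀ x ∈ K, ∃ V : Set X, IsClopen V ∧ x ∈ V ∧ V ⊆ U := fun x hx =>
    compact_exists_isClopen_in_isOpen hU (hKU hx)
  choose! V hVclopen hVmem hVsub using hcl
  obtain ⟨t, htK, hcover⟩ := hK.elim_nhds_subcover V (fun x hx =>
    ((hVclopen x hx).2).mem_nhds (hVmem x hx))
  refine ⟨⋃ x ∈ t, V x, ?_, hcover, ?_⟩
  · exact isClopen_biUnion_finset fun x hx => hVclopen x (htK x hx)
  · exact Set.iUnion₂_subset fun x hx => hVsub x (htK x hx)

end Sep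

section Content2

variable {X : Type*} [TopologicalSpace X] [CompactSpace X] [T2Space X]
  [TotallyDisconnectedSpace X]
  (φ : X ≃ₜ X) (x₀ : X) (𝒰 : Ultrafilter ℕ)

/-- Outer approximation of `birkLim` by clopen supersets. -/
noncomputable def lamR (K : Set X) : ℝ :=
  sInf (birkLim φ x₀ 𝒰 '' {V | IsClopen V ∧ K ⊆ V})

lemma lamR_set_nonempty (K : Set X) :
    (birkLim φ x₀ 𝒰 '' {V | IsClopen V ∧ K ⊆ V}).Nonempty :=
  ⟨_, ⟨Set.univ, ⟨isClopen_univ, Set.subset_univ K⟩, rfl⟩⟩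

lemma lamR_set_bddBelow (K : Set X) :
    BddBelow (birkLim φ x₀ 𝒰 '' {V | IsClopen V ∧ K ⊆ V}) :=
  ⟨0, by rintro x ⟨V, -, rfl⟩; exact birkLim_nonneg φ x₀ 𝒰 V⟩

lemma lamR_le {K V : Set X} (hV : IsClopen V) (hKV : K ⊆ V) :
    lamR φ x₀ 𝒰 K ≤ birkLim φ x₀ 𝒰 V :=
  csInf_le (lamR_set_bddBelow φ x₀ 𝒰 K) ⟨V, ⟨hV, hKV⟩, rfl⟩

lemma le_lamR {K : Set X} {c : ℝ} (hc : ∀ V : Set X, IsClopen V → K ⊆ V → c ≤ birkLim φ x₀ 𝒰 V) :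
    c ≤ lamR φ x₀ 𝒰 K :=
  le_csInf (lamR_set_nonempty φ x₀ 𝒰 K) (by rintro x ⟨V, ⟨hV, hKV⟩, rfl⟩; exact hc V hV hKV)

lemma lamR_nonneg (K : Set X) : 0 ≤ lamR φ x₀ 𝒰 K :=
  le_lamR φ x₀ 𝒰 fun V _ _ => birkLim_nonneg φ x₀ 𝒰 V

lemma lamR_mono {K₁ K₂ : Set X} (h : K₁ ⊆ K₂) : lamR φ x₀ 𝒰 K₁ ≤ lamR φ x₀ 𝒰 K₂ :=
  le_lamR φ x₀ 𝒰 fun V hV hKV => lamR_le φ x₀ 𝒰 hV (h.trans hKV)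

lemma lamR_clopen {V : Set X} (hV : IsClopen V) : lamR φ x₀ 𝒰 V = birkLim φ x₀ 𝒰 V :=
  le_antisymm (lamR_le φ x₀ 𝒰 hV Subset.rfl)
    (le_lamR φ x₀ 𝒰 fun W _ hVW => birkLim_mono φ x₀ 𝒰 hVW)

lemma birkLim_union_le {V W : Set X} :
    birkLim φ x₀ 𝒰 (V ∪ W) ≤ birkLim φ x₀ 𝒰 V + birkLim φ x₀ 𝒰 W := by
  have h1 : V ∪ W = V ∪ (W \ V) := by simp [Set.union_diff_self]
  rw [h1, birkLim_union φ x₀ 𝒰 disjoint_sdiff_self_right]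
  exact add_le_add le_rfl (birkLim_mono φ x₀ 𝒰 Set.diff_subset)

lemma lamR_union_le (K₁ K₂ : Set X) :
    lamR φ x₀ 𝒰 (K₁ ∪ K₂) ≤ lamR φ x₀ 𝒰 K₁ + lamR φ x₀ 𝒰 K₂ := by
  rw [← sub_le_iff_le_add']
  refine le_lamR φ x₀ 𝒰 fun V₂ hV₂ hKV₂ => ?_
  rw [sub_le_iff_le_add, ← sub_le_iff_le_add']
  refine le_lamR φ x₀ 𝒰 fun V₁ hV₁ hKV₁ => ?_
  rw [sub_le_iff_le_add, add_comm]
  calc lamR φ x₀ 𝒰 (K₁ ∪ K₂) ≤ birkLim φ x₀ 𝒰 (V₁ ∪ V₂) :=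
        lamR_le φ x₀ 𝒰 (hV₁.union hV₂) (Set.union_subset_union hKV₁ hKV₂)
    _ ≤ birkLim φ x₀ 𝒰 V₁ + birkLim φ x₀ 𝒰 V₂ := birkLim_union_le φ x₀ 𝒰
    _ = _ := add_comm _ _

lemma lamR_union_disjoint {K₁ K₂ : Set X} (hK₁ : IsCompact K₁) (hK₂ : IsCompact K₂)
    (hd : Disjoint K₁ K₂) :
    lamR φ x₀ 𝒰 (K₁ ∪ K₂) = lamR φ x₀ 𝒰 K₁ + lamR φ x₀ 𝒰 K₂ := by
  refine le_antisymm (lamR_union_le φ x₀ 𝒰 K₁ K₂) ?_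
  obtain ⟨W, hW, hK₁W, hWc⟩ := exists_clopen_between hK₁ hK₂.isClosed.isOpen_compl
    (Set.subset_compl_iff_disjoint_right.mpr hd)
  refine le_lamR φ x₀ 𝒰 fun V hV hKV => ?_
  have hsplit : V = (V ∩ W) ∪ (V \ W) := by simp [Set.inter_union_diff]
  have : birkLim φ x₀ 𝒰 V = birkLim φ x₀ 𝒰 (V ∩ W) + birkLim φ x₀ 𝒰 (V \ W) := by
    conv_lhs => rw [hsplit]
    exact birkLim_union φ x₀ 𝒰 (disjoint_sdiff_self_right.mono_left Set.inter_subset_right)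
  rw [this]
  refine add_le_add ?_ ?_
  · exact lamR_le φ x₀ 𝒰 (hV.inter hW)
      (Set.subset_inter (Set.subset_union_left.trans hKV) hK₁W)
  · refine lamR_le φ x₀ 𝒰 (hV.diff hW) ?_
    intro x hx
    exact ⟨hKV (Set.subset_union_right hx), fun hxW => (hWc hxW) hx⟩

open TopologicalSpace in
/-- The invariant content built from ultrafilter limits of Birkhoff averages. -/
noncomputable def invContent : Content X where
  toFun K := Real.toNNReal (lamR φ x₀ 𝒰 K)
  mono' K₁ K₂ h := Real.toNNReal_le_toNNReal (lamR_mono φ x₀ 𝒰 h)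
  sup_disjoint' K₁ K₂ hd _ _ := by
    show Real.toNNReal (lamR φ x₀ 𝒰 (↑K₁ ∪ ↑K₂)) = _
    have h : lamR φ x₀ 𝒰 (↑K₁ ∪ ↑K₂) = lamR φ x₀ 𝒰 ↑K₁ + lamR φ x₀ 𝒰 ↑K₂ :=
      lamR_union_disjoint φ x₀ 𝒰 K₁.2 K₂.2 hd
    rw [h, Real.toNNReal_add (lamR_nonneg φ x₀ 𝒰 _) (lamR_nonneg φ x₀ 𝒰 _)]
  sup_le' K₁ K₂ := by
    show Real.toNNReal (lamR φ x₀ 𝒰 (↑K₁ ∪ ↑K₂)) ≤ _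
    rw [← Real.toNNReal_add (lamR_nonneg φ x₀ 𝒰 _) (lamR_nonneg φ x₀ 𝒰 _)]
    exact Real.toNNReal_le_toNNReal (lamR_union_le φ x₀ 𝒰 _ _)

variable [MeasurableSpace X] [BorelSpace X]

/-- The candidate invariant measure. -/
noncomputable def invMeasure : Measure X := (invContent φ x₀ 𝒰).measure

lemma invMeasure_clopen {V : Set X} (hV : IsClopen V) :
    invMeasure φ x₀ 𝒰 V = ENNReal.ofReal (birkLim φ x₀ 𝒰 V) := by
  rw [invMeasure, (invContent φ x₀ 𝒰).measure_apply hV.2.measurableSet,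
    (invContent φ x₀ 𝒰).outerMeasure_of_isOpen V hV.2,
    (invContent φ x₀ 𝒰).innerContent_of_isCompact hV.1.isCompact hV.2]
  show (Real.toNNReal (lamR φ x₀ 𝒰 V) : ENNReal) = _
  rw [lamR_clopen φ x₀ 𝒰 hV]
  rfl

section Ext

lemma measure_ext_clopen [SecondCountableTopology X] {μ ν : Measure X}
    [IsProbabilityMeasure μ] [IsProbabilityMeasure ν]
    (h : ∀ V : Set X, IsClopen V → μ V = ν V) : μ = ν := by
  refine ext_of_generate_finite {V : Set X | IsClopen V} ?_ ?_ (fun s hs => h s hs) ?_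
  · rw [BorelSpace.measurable_eq (α := X),
      isTopologicalBasis_isClopen.borel_eq_generateFrom]
  · rintro s hs t ht -
    exact hs.inter ht
  · rw [measure_univ, measure_univ]

end Ext

variable (h𝒰 : (𝒰 : Filter ℕ) ≤ atTop)

include h𝒰 in
lemma invMeasure_univ : invMeasure φ x₀ 𝒰 Set.univ = 1 := by
  rw [invMeasure_clopen φ x₀ 𝒰 isClopen_univ, birkLim_univ φ x₀ 𝒰 h𝒰, ENNReal.ofReal_one]

include h𝒰 in
lemma isProbabilityMeasure_invMeasure : IsProbabilityMeasure (invMeasure φ x₀ 𝒰) :=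
  ⟨invMeasure_univ φ x₀ 𝒰 h𝒰⟩

include h𝒰 in
lemma invMeasure_map [SecondCountableTopology X] :
    Measure.map φ (invMeasure φ x₀ 𝒰) = invMeasure φ x₀ 𝒰 := by
  have hprob := isProbabilityMeasure_invMeasure φ x₀ 𝒰 h𝒰
  have hmap : IsProbabilityMeasure (Measure.map φ (invMeasure φ x₀ 𝒰)) :=
    Measure.isProbabilityMeasure_map φ.continuous.measurable.aemeasurable
  refine measure_ext_clopen fun V hV => ?_
  rw [Measure.map_apply φ.continuous.measurable hV.2.measurableSet,
    invMeasure_clopen φ x₀ 𝒰 (hV.preimage φ.continuous),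
    invMeasure_clopen φ x₀ 𝒰 hV, birkLim_preimage φ x₀ 𝒰 h𝒰]

end Content2

section Unique

open Set Filter Topology

variable {X : Type*} [MetricSpace X] [CompactSpace X] [TotallyDisconnectedSpace X]
  [Nonempty X] [MeasurableSpace X] [BorelSpace X] (φ : X ≃ₜ X)

/-- The continuous integer valued map `b·χ_V - a`. -/
noncomputable def clopenMap (V : Set X) (hV : IsClopen V) (a b : ℤ) : C(X, ℤ) := by
  classical
  refine ⟨fun x => (if x ∈ V then b else 0) - a, Continuous.sub ?_ continuous_const⟩
  refine Continuous.if (fun x hx => ?_) continuous_const continuous_const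
  rw [show {x | x ∈ V} = V from rfl, hV.frontier_eq] at hx
  exact absurd hx (Set.notMem_empty x)

lemma integral_clopenMap {V : Set X} (hV : IsClopen V) (a b : ℤ) (μ : Measure X)
    [IsProbabilityMeasure μ] :
    ∫ x, ((clopenMap (X := X) V hV a b) x : ℝ) ∂μ = b * (μ V).toReal - a := by
  classical
  have heq : (fun x => ((clopenMap (X := X) V hV a b) x : ℝ))
      = fun x => V.indicator (fun _ => (b : ℝ)) x - a := by
    funext x
    simp only [clopenMap, ContinuousMap.coe_mk, Set.indicator_apply]
    push_cast [apply_ite (fun z : ℤ => (z : ℝ))]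
    ring
  rw [heq, integral_sub ((integrable_const _).indicator hV.2.measurableSet)
    (integrable_const _), integral_indicator_const _ hV.2.measurableSet, integral_const]
  simp [mul_comm]
  left; rfl

theorem invprob_unique_aux
    (h : ∀ f : C(X, ℤ),
      (∀ μ ∈ InvProbMeasures φ, 0 ≤ ∫ x, (f x : ℝ) ∂μ) ∨
      (∀ μ ∈ InvProbMeasures φ, ∫ x, (f x : ℝ) ∂μ ≤ 0))
    {μ ν : Measure X} (hμ : μ ∈ InvProbMeasures φ) (hν : ν ∈ InvProbMeasures φ)
    {V : Set X} (hV : IsClopen V) : ¬ ((μ V).toReal < (ν V).toReal) := by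
  intro hlt
  have hμp : IsProbabilityMeasure μ := hμ.1
  have hνp : IsProbabilityMeasure ν := hν.1
  obtain ⟨q, hq1, hq2⟩ := exists_rat_btwn hlt
  have hden : (0:ℝ) < (q.den : ℝ) := by exact_mod_cast q.pos
  set f := clopenMap (X := X) V hV q.num q.den with hf
  have hμint : ∫ x, (f x : ℝ) ∂μ < 0 := by
    rw [hf, integral_clopenMap (X := X) hV q.num q.den μ, sub_neg]
    rw [Rat.cast_def, lt_div_iff₀ hden] at hq1
    push_cast
    linarith [hq1, mul_comm ((μ V).toReal) ((q.den : ℝ))]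
  have hνint : 0 < ∫ x, (f x : ℝ) ∂ν := by
    rw [hf, integral_clopenMap (X := X) hV q.num q.den ν, sub_pos]
    rw [Rat.cast_def, div_lt_iff₀ hden] at hq2
    push_cast
    linarith [hq2, mul_comm ((ν V).toReal) ((q.den : ℝ))]
  rcases h f with hpos | hneg
  · exact absurd (hpos μ hμ) (not_le.mpr hμint)
  · exact absurd (hneg ν hν) (not_le.mpr hνint)

end Unique

theorem stmt_1 {X : Type*} [MetricSpace X] [CompactSpace X]
    [TotallyDisconnectedSpace X] [Nonempty X]
    [MeasurableSpace X] [BorelSpace X] (φ : X ≃ₜ X)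
    (h : ∀ f : C(X, ℤ),
      (∀ μ ∈ InvProbMeasures φ, 0 ≤ ∫ x, (f x : ℝ) ∂μ) ∨
      (∀ μ ∈ InvProbMeasures φ, ∫ x, (f x : ℝ) ∂μ ≤ 0)) :
    ∃ μ : Measure X, InvProbMeasures φ = {μ} := by
  obtain ⟨x₀⟩ := ‹Nonempty X›
  set 𝒰 := Ultrafilter.of (Filter.atTop : Filter ℕ) with h𝒰def
  have h𝒰 : (𝒰 : Filter ℕ) ≤ Filter.atTop := Ultrafilter.of_le _
  have hprob := isProbabilityMeasure_invMeasure φ x₀ 𝒰 h𝒰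
  have hmem : invMeasure φ x₀ 𝒰 ∈ InvProbMeasures φ :=
    ⟨hprob, invMeasure_map φ x₀ 𝒰 h𝒰⟩
  refine ⟨invMeasure φ x₀ 𝒰, Set.eq_singleton_iff_unique_mem.mpr ⟨hmem, fun ν hν => ?_⟩⟩
  have hνp : IsProbabilityMeasure ν := hν.1
  refine measure_ext_clopen fun V hV => ?_
  have h1 := invprob_unique_aux φ h hν hmem (V := V) hV
  have h2 := invprob_unique_aux φ h hmem hν (V := V) hV
  have heq : (ν V).toReal = ((invMeasure φ x₀ 𝒰) V).toReal :=
    le_antisymm (not_lt.mp h2) (not_lt.mp h1)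
  exact (ENNReal.toReal_eq_toReal_iff' (measure_ne_top ν V) (measure_ne_top _ V)).mp heq
end

section
/- Let X be a totally disconnected compact metric space and φ : X → X a homeomorphism. Suppose every pair of clopen subsets of X is comparable: for all clopen A, B, either μ(A) > μ(B) for all μ ∈ M_φ, or μ(A) < μ(B) for all μ ∈ M_φ, or μ(A) = μ(B) for all μ ∈ M_φ. If Y ⊆ X is a minimal set supporting some μ ∈ M_φ, then every ν ∈ M_φ is supported on Y, i.e., ν(X \ Y) = 0. -/
open MeasureTheory

/-- Comparability of clopen sets: `A ≥ B` or `B ≥ A` in the sense of the paper. -/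
def ClopenGe {X : Type*} [TopologicalSpace X] [MeasurableSpace X]
    (φ : X ≃ₜ X) (A B : Set X) : Prop :=
  (∀ μ ∈ InvProbMeasures φ, μ B < μ A) ∨ (∀ μ ∈ InvProbMeasures φ, μ A = μ B)

/-- `Y` is a minimal set for `φ`. -/
def IsMinimalSet {X : Type*} [TopologicalSpace X] (φ : X ≃ₜ X) (Y : Set X) : Prop :=
  Y.Nonempty ∧ IsClosed Y ∧ φ '' Y = Y ∧
    ∀ Z ⊆ Y, Z.Nonempty → IsClosed Z → φ '' Z = Z → Z = Y

/-- In a compact Hausdorff totally disconnected space, a compact set inside an open set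
can be separated from the complement by a clopen set. -/
lemma exists_isClopen_between {X : Type*} [TopologicalSpace X] [T2Space X] [CompactSpace X]
    [TotallyDisconnectedSpace X] {K U : Set X} (hK : IsCompact K) (hU : IsOpen U)
    (hKU : K ⊆ U) : ∃ V : Set X, IsClopen V ∧ K ⊆ V ∧ V ⊆ U := by
  have h : ∀ x : X, x ∈ K → ∃ V : Set X, IsClopen V ∧ x ∈ V ∧ V ⊆ U := fun x hx =>
    compact_exists_isClopen_in_isOpen hU (hKU hx)
  choose! V hVc hxV hVU using h
  obtain ⟨t, htK, htfin, hcover⟩ := hK.elim_finite_subcover_image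
    (fun x hx => (hVc x hx).2) (fun x hx => Set.mem_biUnion hx (hxV x hx))
  exact ⟨⋃ x ∈ t, V x, htfin.isClopen_biUnion (fun x hx => hVc x (htK hx)), hcover,
    Set.iUnion₂_subset fun x hx => hVU x (htK hx)⟩

theorem stmt_4 {X : Type*} [MetricSpace X] [CompactSpace X]
    [TotallyDisconnectedSpace X] [Nonempty X]
    [MeasurableSpace X] [BorelSpace X] (φ : X ≃ₜ X)
    (hcomp : ∀ A B : Set X, IsClopen A → IsClopen B → ClopenGe φ A B ∨ ClopenGe φ B A)
    (Y : Set X) (hY : IsMinimalSet φ Y)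
    (μ : Measure X) (hμ : μ ∈ InvProbMeasures φ) (hμY : μ Y = 1) :
    ∀ ν ∈ InvProbMeasures φ, ν Yᶜ = 0 := by
  intro ν hν
  by_contra h0
  obtain ⟨_, hYc, hYφ, _⟩ := hY
  have hνprob : IsProbabilityMeasure ν := hν.1
  have hμprob : IsProbabilityMeasure μ := hμ.1
  have hYm : MeasurableSet Y := hYc.measurableSet
  have hYpre : φ ⁻¹' Y = Y := by
    conv_lhs => rw [← hYφ]
    exact Set.preimage_image_eq Y φ.injective
  have hYcpre : φ ⁻¹' Yᶜ = Yᶜ := by rw [Set.preimage_compl, hYpre]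
  -- the normalized restriction ν'
  set c : ENNReal := ν Yᶜ with hc
  have hctop : c ≠ ⊤ := (measure_lt_top ν Yᶜ).ne
  set ν' : Measure X := c⁻¹ • ν.restrict Yᶜ with hν'def
  have hν'Yc : ν' Yᶜ = 1 := by
    rw [hν'def, Measure.smul_apply, smul_eq_mul, Measure.restrict_apply hYm.compl,
      Set.inter_self, ← hc, ENNReal.inv_mul_cancel h0 hctop]
  have hν'prob : IsProbabilityMeasure ν' := by
    constructor
    rw [hν'def, Measure.smul_apply, smul_eq_mul, Measure.restrict_apply MeasurableSet.univ,
      Set.univ_inter, ← hc, ENNReal.inv_mul_cancel h0 hctop]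
  have hν'inv : Measure.map φ ν' = ν' := by
    rw [hν'def, Measure.map_smul]
    congr 1
    have := φ.toMeasurableEquiv.restrict_map ν Yᶜ
    simp only [Homeomorph.toMeasurableEquiv_coe] at this
    calc Measure.map φ (ν.restrict Yᶜ)
        = Measure.map φ (ν.restrict (φ ⁻¹' Yᶜ)) := by rw [hYcpre]
      _ = (Measure.map φ ν).restrict Yᶜ := this.symm
      _ = ν.restrict Yᶜ := by rw [hν.2]
  have hν'mem : ν' ∈ InvProbMeasures φ := ⟨hν'prob, hν'inv⟩
  have hν'Y : ν' Y = 0 := by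
    have := measure_compl hYm.compl (measure_ne_top ν' Yᶜ)
    rw [compl_compl, hν'Yc, measure_univ, tsub_self] at this
    exact this
  -- inner regularity: find a compact set inside Yᶜ of positive measure
  obtain ⟨K, hKYc, hKcomp, hKpos⟩ :=
    MeasurableSet.exists_lt_isCompact (μ := ν') hYm.compl (by rw [hν'Yc]; norm_num : (0:ENNReal) < ν' Yᶜ)
  obtain ⟨A, hAclopen, hKA, hAYc⟩ := exists_isClopen_between hKcomp hYc.isOpen_compl hKYc
  have hν'A : 0 < ν' A := lt_of_lt_of_le hKpos (measure_mono hKA)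
  -- outer regularity: find an open set around Y of small measure
  obtain ⟨U, hYU, hUopen, hUsmall⟩ := Set.exists_isOpen_lt_of_lt (μ := ν') Y (ν' A)
    (by rw [hν'Y]; exact hν'A)
  obtain ⟨B, hBclopen, hYB, hBU⟩ := exists_isClopen_between (hYc.isCompact) hUopen hYU
  have hν'B : ν' B < ν' A := lt_of_le_of_lt (measure_mono hBU) hUsmall
  have hμA : μ A = 0 := by
    have hμYc : μ Yᶜ = 0 := by
      have := measure_compl hYm (measure_ne_top μ Y)
      rw [hμY, measure_univ, tsub_self] at this
      exact this
    exact measure_mono_null hAYc hμYc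
  have hμB : μ B = 1 := by
    have h1 := measure_mono (μ := μ) hYB
    rw [hμY] at h1
    exact le_antisymm prob_le_one h1
  rcases hcomp A B hAclopen hBclopen with (h | h) | (h | h)
  · have := h μ hμ; rw [hμA, hμB] at this; exact absurd this (by norm_num)
  · have := h μ hμ; rw [hμA, hμB] at this; exact absurd this (by norm_num)
  · exact absurd (h ν' hν'mem) (not_lt.mpr hν'B.le)
  · exact absurd (h ν' hν'mem) (ne_of_lt hν'B)
end

section
/- Let X be a totally disconnected compact metric space and φ : X → X a homeomorphism. Suppose any two clopen subsets of X are comparable (for all clopen A, B: μ(A) > μ(B) for all μ ∈ M_φ, or μ(A) < μ(B) for all μ ∈ M_φ, or μ(A) = μ(B) for all μ ∈ M_φ). Then φ has at most one minimal set that supports an invariant probability measure. -/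
open MeasureTheory

/-- Separate a compact set from a disjoint closed set by a clopen set. -/
lemma exists_clopen_sep {X : Type*} [MetricSpace X] [CompactSpace X]
    [TotallyDisconnectedSpace X] {K C : Set X} (hK : IsClosed K) (hC : IsClosed C)
    (hd : Disjoint K C) : ∃ A : Set X, IsClopen A ∧ K ⊆ A ∧ A ∩ C = ∅ := by
  have hKc : IsCompact K := hK.isCompact
  have hopen : IsOpen Cᶜ := hC.isOpen_compl
  have hsub : K ⊆ Cᶜ := Set.disjoint_left.mp hd
  choose V hV hxV hVsub using fun x : K => compact_exists_isClopen_in_isOpen hopen (hsub x.2)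
  obtain ⟨t, ht⟩ := hKc.elim_finite_subcover (fun x : K => V x) (fun x => (hV x).2)
    (fun x hx => Set.mem_iUnion.mpr ⟨⟨x, hx⟩, hxV ⟨x, hx⟩⟩)
  refine ⟨⋃ x ∈ t, V x, isClopen_biUnion_finset (fun x _ => hV x), ht, ?_⟩
  rw [Set.eq_empty_iff_forall_notMem]
  rintro y ⟨hy, hyC⟩
  obtain ⟨x, _, hyx⟩ := Set.mem_iUnion₂.mp hy
  exact hVsub x hyx hyC

theorem stmt_9 {X : Type*} [MetricSpace X] [CompactSpace X]
    [TotallyDisconnectedSpace X] [Nonempty X]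
    [MeasurableSpace X] [BorelSpace X] (φ : X ≃ₜ X)
    (hcomp : ∀ A B : Set X, IsClopen A → IsClopen B → ClopenGe φ A B ∨ ClopenGe φ B A)
    (Y₁ Y₂ : Set X) (hY₁ : IsMinimalSet φ Y₁) (hY₂ : IsMinimalSet φ Y₂)
    (μ₁ μ₂ : Measure X) (hμ₁ : μ₁ ∈ InvProbMeasures φ) (hμ₂ : μ₂ ∈ InvProbMeasures φ)
    (h₁ : μ₁ Y₁ = 1) (h₂ : μ₂ Y₂ = 1) :
    Y₁ = Y₂ := by
  obtain ⟨hne₁, hcl₁, hinv₁, hmin₁⟩ := hY₁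
  obtain ⟨hne₂, hcl₂, hinv₂, hmin₂⟩ := hY₂
  by_cases hZ : (Y₁ ∩ Y₂).Nonempty
  · -- the intersection is a nonempty closed invariant subset of both
    have hinv : φ '' (Y₁ ∩ Y₂) = Y₁ ∩ Y₂ := by
      rw [Set.image_inter φ.injective, hinv₁, hinv₂]
    have e₁ := hmin₁ _ Set.inter_subset_left hZ (hcl₁.inter hcl₂) hinv
    have e₂ := hmin₂ _ Set.inter_subset_right hZ (hcl₁.inter hcl₂) hinv
    exact e₁.symm.trans e₂

  · -- disjoint: derive a contradiction with comparability
    exfalso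
    have hd : Disjoint Y₁ Y₂ := Set.not_nonempty_iff_eq_empty.mp hZ |>
      Set.disjoint_iff_inter_eq_empty.mpr
    obtain ⟨A, hA, hY₁A, hAY₂⟩ := exists_clopen_sep hcl₁ hcl₂ hd
    haveI := hμ₁.1; haveI := hμ₂.1
    have hμ₁A : μ₁ A = 1 := le_antisymm prob_le_one
      (h₁ ▸ measure_mono hY₁A)
    have hμ₂Ac : μ₂ Aᶜ = 1 := le_antisymm prob_le_one
      (h₂ ▸ measure_mono (fun x hx => fun hA' =>
        Set.eq_empty_iff_forall_notMem.mp hAY₂ x ⟨hA', hx⟩))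
    have hμ₁Ac : μ₁ Aᶜ = 0 :=
      (prob_compl_eq_zero_iff hA.2.measurableSet).mpr hμ₁A
    have hμ₂A : μ₂ A = 0 := by
      have := (prob_compl_eq_zero_iff (μ := μ₂) hA.2.measurableSet.compl).mpr hμ₂Ac
      rwa [compl_compl] at this
    rcases hcomp A Aᶜ hA hA.compl with (h | h) | (h | h)
    · exact absurd (h μ₂ hμ₂) (by rw [hμ₂A, hμ₂Ac]; simp)
    · exact absurd (h μ₁ hμ₁) (by rw [hμ₁A, hμ₁Ac]; simp)
    · exact absurd (h μ₁ hμ₁) (by rw [hμ₁A, hμ₁Ac]; simp)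
    · exact absurd (h μ₂ hμ₂) (by rw [hμ₂A, hμ₂Ac]; simp)
end

section
/- Let X be a totally disconnected compact metric space, φ : X → X a homeomorphism, and suppose G_φ = C(X,ℤ)/Z_φ is totally ordered (for every f ∈ C(X,ℤ), either ∫ f dμ ≥ 0 for all μ ∈ M_φ or ∫ f dμ ≤ 0 for all μ ∈ M_φ). Then any two clopen subsets of X are comparable: for clopen A, B, either μ(A) > μ(B) for all μ ∈ M_φ, or μ(A) < μ(B) for all μ ∈ M_φ, or μ(A) = μ(B) for all μ ∈ M_φ. -/
open MeasureTheory Classical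

section aux

variable {X : Type*} [MetricSpace X] [CompactSpace X]
    [MeasurableSpace X] [BorelSpace X]

lemma aux_integrable (f : C(X, ℤ)) (μ : Measure X) [IsFiniteMeasure μ] :
    Integrable (fun x => (f x : ℝ)) μ := by
  have hc : Continuous fun x => (f x : ℝ) := continuous_of_discreteTopology.comp f.continuous
  exact hc.integrable_of_hasCompactSupport (HasCompactSupport.of_compactSpace _)

lemma aux_indicator_cont {A : Set X} (hA : IsClopen A) :
    Continuous fun x => (if x ∈ A then (1:ℤ) else 0) := by
  have h := (continuous_boolIndicator_iff_isClopen A).2 hA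
  have : (fun x => (if x ∈ A then (1:ℤ) else 0)) =
      (fun b : Bool => if b then (1:ℤ) else 0) ∘ A.boolIndicator := by
    funext x
    by_cases hx : x ∈ A <;> simp [Set.boolIndicator, hx]
  rw [this]
  exact (continuous_of_discreteTopology).comp h

lemma aux_integral_indicator {A : Set X} (hA : IsClopen A) (μ : Measure X)
    [IsFiniteMeasure μ] :
    ∫ x, ((if x ∈ A then (1:ℤ) else 0) : ℝ) ∂μ = (μ A).toReal := by
  have hmA : MeasurableSet A := hA.isOpen.measurableSet
  have : (fun x => ((if x ∈ A then (1:ℤ) else 0) : ℝ)) = A.indicator 1 := by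
    funext x; by_cases hx : x ∈ A <;> simp [hx]
  rw [this, integral_indicator_one hmA]
  rfl

/-- Key step: if an integer-valued function has nonnegative integral against every
invariant measure, then either all integrals are positive or all are zero. -/
lemma aux_key {X : Type*} [MetricSpace X] [CompactSpace X]
    [MeasurableSpace X] [BorelSpace X] (φ : X ≃ₜ X)
    (htot : ∀ f : C(X, ℤ),
      (∀ μ ∈ InvProbMeasures φ, 0 ≤ ∫ x, (f x : ℝ) ∂μ) ∨
      (∀ μ ∈ InvProbMeasures φ, ∫ x, (f x : ℝ) ∂μ ≤ 0))
    (f : C(X, ℤ)) (h : ∀ μ ∈ InvProbMeasures φ, 0 ≤ ∫ x, (f x : ℝ) ∂μ) :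
    (∀ μ ∈ InvProbMeasures φ, 0 < ∫ x, (f x : ℝ) ∂μ) ∨
    (∀ μ ∈ InvProbMeasures φ, ∫ x, (f x : ℝ) ∂μ = 0) := by
  by_cases h0 : ∃ μ₀ ∈ InvProbMeasures φ, ∫ x, (f x : ℝ) ∂μ₀ = 0
  · obtain ⟨μ₀, hμ₀, hint₀⟩ := h0
    right
    intro μ hμ
    have h1 := h μ hμ
    by_contra hne
    have hpos : 0 < ∫ x, (f x : ℝ) ∂μ := lt_of_le_of_ne h1 (Ne.symm hne)
    obtain ⟨n, hn⟩ := exists_nat_gt (1 / ∫ x, (f x : ℝ) ∂μ)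
    have hn' : 1 < (n : ℝ) * ∫ x, (f x : ℝ) ∂μ := by
      rw [div_lt_iff₀ hpos] at hn
      linarith
    set g : C(X, ℤ) := n • f - 1 with hg
    have hgint : ∀ ν : Measure X, ν ∈ InvProbMeasures φ →
        ∫ x, (g x : ℝ) ∂ν = (n : ℝ) * ∫ x, (f x : ℝ) ∂ν - 1 := by
      intro ν hν
      haveI : IsProbabilityMeasure ν := hν.1
      have : (fun x => (g x : ℝ)) = fun x => (n : ℝ) * (f x : ℝ) - 1 := by
        funext x; simp [hg]
      rw [this, integral_sub (((aux_integrable f ν).const_mul _)) (integrable_const 1),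
        integral_const_mul, integral_const]
      simp
    rcases htot g with hg1 | hg1
    · have := hg1 μ₀ hμ₀
      rw [hgint μ₀ hμ₀, hint₀] at this
      linarith
    · have := hg1 μ hμ
      rw [hgint μ hμ] at this
      linarith
  · left
    intro μ hμ
    push_neg at h0
    exact lt_of_le_of_ne (h μ hμ) (fun e => h0 μ hμ e.symm)

end aux

theorem stmt_12 {X : Type*} [MetricSpace X] [CompactSpace X]
    [TotallyDisconnectedSpace X]
    [MeasurableSpace X] [BorelSpace X] (φ : X ≃ₜ X)
    (htot : ∀ f : C(X, ℤ),
      (∀ μ ∈ InvProbMeasures φ, 0 ≤ ∫ x, (f x : ℝ) ∂μ) ∨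
      (∀ μ ∈ InvProbMeasures φ, ∫ x, (f x : ℝ) ∂μ ≤ 0))
    (A B : Set X) (hA : IsClopen A) (hB : IsClopen B) :
    (∀ μ ∈ InvProbMeasures φ, μ B < μ A) ∨
    (∀ μ ∈ InvProbMeasures φ, μ A < μ B) ∨
    (∀ μ ∈ InvProbMeasures φ, μ A = μ B) := by
  classical
  set f : C(X, ℤ) := ⟨fun x => (if x ∈ A then 1 else 0) - (if x ∈ B then 1 else 0),
    (aux_indicator_cont hA).sub (aux_indicator_cont hB)⟩ with hf
  have hint : ∀ μ : Measure X, μ ∈ InvProbMeasures φ →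
      ∫ x, (f x : ℝ) ∂μ = (μ A).toReal - (μ B).toReal := by
    intro μ hμ
    haveI : IsProbabilityMeasure μ := hμ.1
    have : (fun x => (f x : ℝ)) = fun x =>
        ((if x ∈ A then (1:ℤ) else 0) : ℝ) - ((if x ∈ B then (1:ℤ) else 0) : ℝ) := by
      funext x; simp [hf]
    rw [this, integral_sub, aux_integral_indicator hA, aux_integral_indicator hB]
    · simpa using aux_integrable ⟨_, aux_indicator_cont hA⟩ μ
    · simpa using aux_integrable ⟨_, aux_indicator_cont hB⟩ μ
  have hfin : ∀ (μ : Measure X), μ ∈ InvProbMeasures φ → μ A ≠ ⊤ ∧ μ B ≠ ⊤ := by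
    intro μ hμ
    haveI : IsProbabilityMeasure μ := hμ.1
    exact ⟨measure_ne_top μ A, measure_ne_top μ B⟩
  have hneg : ∀ μ : Measure X, μ ∈ InvProbMeasures φ →
      ∫ x, ((-f) x : ℝ) ∂μ = -((μ A).toReal - (μ B).toReal) := by
    intro μ hμ
    rw [← hint μ hμ, ← integral_neg]
    congr 1; funext x; simp
  rcases htot f with h | h
  · rcases aux_key φ htot f h with h' | h'
    · left
      intro μ hμ
      have := h' μ hμ
      rw [hint μ hμ] at this
      obtain ⟨hAfin, hBfin⟩ := hfin μ hμ
      have : (μ B).toReal < (μ A).toReal := by linarith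
      exact (ENNReal.toReal_lt_toReal hBfin hAfin).1 this
    · right; right
      intro μ hμ
      have := h' μ hμ
      rw [hint μ hμ] at this
      obtain ⟨hAfin, hBfin⟩ := hfin μ hμ
      have heq : (μ A).toReal = (μ B).toReal := by linarith
      exact (ENNReal.toReal_eq_toReal_iff' hAfin hBfin).1 heq
  · have h' : ∀ μ ∈ InvProbMeasures φ, 0 ≤ ∫ x, ((-f) x : ℝ) ∂μ := by
      intro μ hμ
      rw [hneg μ hμ, ← hint μ hμ]
      linarith [h μ hμ]
    rcases aux_key φ htot (-f) h' with h'' | h''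
    · right; left
      intro μ hμ
      have := h'' μ hμ
      rw [hneg μ hμ] at this
      obtain ⟨hAfin, hBfin⟩ := hfin μ hμ
      have : (μ A).toReal < (μ B).toReal := by linarith
      exact (ENNReal.toReal_lt_toReal hAfin hBfin).1 this
    · right; right
      intro μ hμ
      have := h'' μ hμ
      rw [hneg μ hμ] at this
      obtain ⟨hAfin, hBfin⟩ := hfin μ hμ
      have heq : (μ A).toReal = (μ B).toReal := by linarith
      exact (ENNReal.toReal_eq_toReal_iff' hAfin hBfin).1 heq
end
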